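/- For the complete graph on n ≥ 2 vertices with uniform edge weight α > 0 and σ = 1, the covariance matrix ∫₀^t exp(-Ls) exp(-L^T s) ds equals ((1 − exp(-2nαt))/(2nα))·I + (t/n − (1 − exp(-2nαt))/(2n²α))·1·1^T, and hence each diagonal entry minus t/n converges as t → ∞ to (n−1)/(2αn²); i.e., μ(v_k) = 2αn²/(n−1) for every node. -/

import Mathlib

/-!
The complete-graph Laplacian is `L = nα • P` with `P = I - 11ᵀ/n` a symmetric idempotent, so
`exp (-sL) = (I - P) + e^{-nαs} P` and the integrand is `(I - P) + e^{-2nαs} P`. Its entries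
are `1/n + e^{-2nαs} (δ_kj - 1/n)`, whose integral over `[0, t]` is explicit; the diagonal part
beyond `t/n` is `(1 - e^{-2nαt}) (n - 1)/(2αn²)`, which tends to `(n - 1)/(2αn²)`.
-/

open Matrix Filter

open scoped Nat in
theorem IsIdempotentElem.exp_smul {A : Type*} [Ring A] [Algebra ℝ A] [TopologicalSpace A]
    [IsTopologicalRing A] [ContinuousSMul ℝ A] [T2Space A] {q : A} (hq : IsIdempotentElem q)
    (c : ℝ) : NormedSpace.exp (c • q) = (1 - q) + Real.exp c • q := by
  have hterm : ∀ k : ℕ, (k !⁻¹ : ℝ) • (c • q) ^ k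
      = (if k = 0 then 1 - q else 0) + (c ^ k / k !) • q := by
    rintro (_ | k)
    · simp
    · rw [smul_pow, hq.pow_succ_eq, smul_smul, if_neg k.succ_ne_zero, zero_add, inv_mul_eq_div]
  have hseries :
      HasSum (fun k : ℕ => (k !⁻¹ : ℝ) • (c • q) ^ k) ((1 - q) + Real.exp c • q) := by
    simp_rw [hterm]
    refine (hasSum_ite_eq 0 (1 - q)).add ?_
    rw [Real.exp_eq_exp_ℝ]
    exact (NormedSpace.expSeries_div_hasSum_exp c).smul_const q
  exact (congrFun (NormedSpace.exp_eq_tsum ℝ) _).trans hseries.tsum_eq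

theorem IsIdempotentElem.one_sub_add_smul_mul_one_sub_add_smul {R A : Type*} [CommRing R]
    [Ring A] [Algebra R A] {q : A} (hq : IsIdempotentElem q) (a b : R) :
    ((1 - q) + a • q) * ((1 - q) + b • q) = (1 - q) + (a * b) • q := by
  have hq' : (1 - q) * q = 0 := by rw [sub_mul, one_mul, hq.eq, sub_self]
  have hq'' : q * (1 - q) = 0 := by rw [mul_sub, mul_one, hq.eq, sub_self]
  simp only [add_mul, mul_add, smul_mul_assoc, mul_smul_comm, hq', hq'', hq.one_sub.eq, hq.eq,
    smul_zero, smul_smul, zero_add, add_zero, mul_comm b a]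

theorem integral_exp_neg_mul {c : ℝ} (hc : c ≠ 0) (t : ℝ) :
    ∫ s in (0 : ℝ)..t, Real.exp (-(c * s)) = (1 - Real.exp (-(c * t))) / c := by
  simp_rw [← neg_mul]
  rw [intervalIntegral.integral_comp_mul_left Real.exp (neg_ne_zero.mpr hc), integral_exp,
    mul_zero, Real.exp_zero, smul_eq_mul]
  field_simp
  ring

theorem tendsto_one_sub_exp_neg_mul_atTop {c : ℝ} (hc : 0 < c) :
    Tendsto (fun t => 1 - Real.exp (-(c * t))) atTop (nhds 1) := by
  have hexp : Tendsto (fun t => Real.exp (-(c * t))) atTop (nhds 0) :=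
    Real.tendsto_exp_atBot.comp <| tendsto_neg_atTop_atBot.comp <| tendsto_id.const_mul_atTop hc
  simpa using hexp.const_sub 1

section CompleteGraph

variable {ι : Type*} [Fintype ι]

theorem allOnes_mul_allOnes :
    (of fun _ _ => 1 : Matrix ι ι ℝ) * (of fun _ _ => 1)
      = (Fintype.card ι : ℝ) • of fun _ _ => 1 := by
  ext k j
  simp [mul_apply]

variable (ι) [DecidableEq ι]

noncomputable def centeringMatrix : Matrix ι ι ℝ :=
  1 - (Fintype.card ι : ℝ)⁻¹ • of fun _ _ => 1

variable {ι}

theorem centeringMatrix_apply (k j : ι) :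
    centeringMatrix ι k j = (if k = j then 1 else 0) - (Fintype.card ι : ℝ)⁻¹ := by
  simp [centeringMatrix, one_apply]

theorem centeringMatrix_transpose : (centeringMatrix ι)ᵀ = centeringMatrix ι := by
  ext k j
  simp only [transpose_apply, centeringMatrix_apply, eq_comm]

theorem isIdempotentElem_centeringMatrix [Nonempty ι] :
    IsIdempotentElem (centeringMatrix ι) := by
  have hcard : (Fintype.card ι : ℝ) ≠ 0 := Nat.cast_ne_zero.mpr Fintype.card_ne_zero
  have hscalar : (Fintype.card ι : ℝ)⁻¹ * (Fintype.card ι : ℝ)⁻¹ * Fintype.card ι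
      = (Fintype.card ι : ℝ)⁻¹ := by field_simp
  rw [IsIdempotentElem, centeringMatrix, sub_mul, mul_sub, mul_sub, one_mul, mul_one, one_mul,
    smul_mul_smul_comm, allOnes_mul_allOnes, smul_smul, hscalar]
  abel

theorem one_sub_centeringMatrix_add_smul_apply (e : ℝ) (k j : ι) :
    ((1 - centeringMatrix ι) + e • centeringMatrix ι) k j
      = (Fintype.card ι : ℝ)⁻¹
          + e * ((if k = j then 1 else 0) - (Fintype.card ι : ℝ)⁻¹) := by
  simp only [Matrix.add_apply, Matrix.sub_apply, Matrix.smul_apply, smul_eq_mul,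
    centeringMatrix_apply, one_apply]
  ring

variable (ι)

noncomputable def completeLaplacian (α : ℝ) : Matrix ι ι ℝ :=
  α • ((Fintype.card ι : ℝ) • 1 - of fun _ _ => 1)

variable {ι}

theorem completeLaplacian_eq_smul_centeringMatrix [Nonempty ι] (α : ℝ) :
    completeLaplacian ι α = (α * Fintype.card ι) • centeringMatrix ι := by
  have hcard : (Fintype.card ι : ℝ) ≠ 0 := Nat.cast_ne_zero.mpr Fintype.card_ne_zero
  rw [completeLaplacian, centeringMatrix, smul_sub, smul_sub, smul_smul, smul_smul, mul_assoc,
    mul_inv_cancel₀ hcard, mul_one, mul_comm]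

theorem completeLaplacian_transpose [Nonempty ι] (α : ℝ) :
    (completeLaplacian ι α)ᵀ = completeLaplacian ι α := by
  rw [completeLaplacian_eq_smul_centeringMatrix, transpose_smul, centeringMatrix_transpose]

theorem exp_neg_smul_completeLaplacian_mul_exp_neg_smul_transpose [Nonempty ι] (α s : ℝ) :
    NormedSpace.exp (-(s • completeLaplacian ι α))
        * NormedSpace.exp (-(s • (completeLaplacian ι α)ᵀ))
      = (1 - centeringMatrix ι)
          + Real.exp (-(2 * Fintype.card ι * α * s)) • centeringMatrix ι := by
  have hP : IsIdempotentElem (centeringMatrix ι) := isIdempotentElem_centeringMatrix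
  rw [completeLaplacian_transpose, completeLaplacian_eq_smul_centeringMatrix, smul_smul,
    ← neg_smul, hP.exp_smul, hP.one_sub_add_smul_mul_one_sub_add_smul, ← Real.exp_add]
  ring_nf

theorem integral_exp_neg_smul_completeLaplacian_mul_exp_neg_smul_transpose_apply [Nonempty ι]
    {α : ℝ} (hα : α ≠ 0) (t : ℝ) (k j : ι) :
    ∫ s in (0 : ℝ)..t, (NormedSpace.exp (-(s • completeLaplacian ι α))
        * NormedSpace.exp (-(s • (completeLaplacian ι α)ᵀ))) k j
      = t * (Fintype.card ι : ℝ)⁻¹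
          + (1 - Real.exp (-(2 * Fintype.card ι * α * t))) / (2 * Fintype.card ι * α)
            * ((if k = j then 1 else 0) - (Fintype.card ι : ℝ)⁻¹) := by
  have hrate : (2 * Fintype.card ι * α : ℝ) ≠ 0 :=
    mul_ne_zero (mul_ne_zero two_ne_zero (Nat.cast_ne_zero.mpr Fintype.card_ne_zero)) hα
  simp only [exp_neg_smul_completeLaplacian_mul_exp_neg_smul_transpose,
    one_sub_centeringMatrix_add_smul_apply]
  rw [intervalIntegral.integral_add intervalIntegrable_const
      (Continuous.intervalIntegrable (by fun_prop) _ _),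
    intervalIntegral.integral_const, intervalIntegral.integral_mul_const,
    integral_exp_neg_mul hrate, smul_eq_mul, sub_zero]

end CompleteGraph

/-- For the complete graph on `n ≥ 2` vertices with uniform weight `α > 0` and
`σ = 1`, the covariance integral `∫₀ᵗ exp(-Ls) exp(-Lᵀs) ds` equals
`((1 − e^{-2nαt})/(2nα))·I + (t/n − (1 − e^{-2nαt})/(2n²α))·11ᵀ`, and each
diagonal entry minus `t/n` converges to `(n−1)/(2αn²)`, i.e.
`μ(v_k) = 2αn²/(n−1)`. -/
theorem complete_graph_covariance_and_certainty {n : ℕ} (hn : 2 ≤ n)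
    (α : ℝ) (hα : 0 < α)
    (L : Matrix (Fin n) (Fin n) ℝ)
    (hL : L = α • ((n : ℝ) • (1 : Matrix (Fin n) (Fin n) ℝ)
        - Matrix.of (fun _ _ => (1 : ℝ)))) :
    (∀ t : ℝ, ∀ k j : Fin n,
      (∫ s in (0 : ℝ)..t,
          ((NormedSpace.exp (-(s • L))) * (NormedSpace.exp (-(s • Lᵀ)))) k j)
        = ((1 - Real.exp (-(2 * n * α * t))) / (2 * n * α)) * (if k = j then 1 else 0)
          + (t / n - (1 - Real.exp (-(2 * n * α * t))) / (2 * n ^ 2 * α))) ∧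
    (∀ k : Fin n,
      Tendsto
        (fun t : ℝ =>
          (∫ s in (0 : ℝ)..t,
              ((NormedSpace.exp (-(s • L))) * (NormedSpace.exp (-(s • Lᵀ)))) k k)
            - t / n)
        atTop (nhds (((n : ℝ) - 1) / (2 * α * n ^ 2)))) := by
  have : Nonempty (Fin n) := ⟨⟨0, by omega⟩⟩
  have hn0 : (n : ℝ) ≠ 0 := by positivity
  obtain rfl : L = completeLaplacian (Fin n) α := by rw [hL, completeLaplacian, Fintype.card_fin]
  have hint := integral_exp_neg_smul_completeLaplacian_mul_exp_neg_smul_transpose_apply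
    (ι := Fin n) hα.ne'
  simp only [Fintype.card_fin] at hint
  refine ⟨fun t k j => ?_, fun k => ?_⟩
  · rw [hint]
    split_ifs <;> field_simp <;> ring
  · have hdiag : ∀ t : ℝ,
        (∫ s in (0 : ℝ)..t, (NormedSpace.exp (-(s • completeLaplacian (Fin n) α))
            * NormedSpace.exp (-(s • (completeLaplacian (Fin n) α)ᵀ))) k k) - t / n
          = (1 - Real.exp (-(2 * n * α * t))) * ((n - 1) / (2 * α * n ^ 2)) := by
      intro t
      rw [hint, if_pos rfl]
      field_simp
      ring
    simp only [hdiag]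
    simpa using (tendsto_one_sub_exp_neg_mul_atTop (by positivity : (0 : ℝ) < 2 * n * α))
      |>.mul_const (((n : ℝ) - 1) / (2 * α * n ^ 2))
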